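/- arXiv:1412.4994 — 4 statements merged into one kernel-verified Lean document; each statement's English description precedes it below -/
import Mathlib

section
/- If a labeled graph G = (V, E) with V ⊂ ℕ has an induced path x₀ x₁ … x_s of length s ≥ 3 such that max{x₀, x_s} < min{x₁, …, x_{s−1}} (a 'bad path'), then G is not 12-representable. -/
/-- A word has no 12-match iff no two consecutive letters form a strictly
increasing pair, i.e. the word is weakly decreasing at each step. -/
def NoMatch12 (w : List ℕ) : Prop := w.Chain' (fun a b => b ≤ a)

/-- `w` 12-represents the labeled graph with vertex set `V ⊂ ℕ` and edge relation
`E`: every vertex occurs in `w`, all letters of `w` are vertices, and for all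
distinct vertices `x, y`: `xy` is an edge iff the subsequence of `w` consisting of
occurrences of `x` and `y` has no 12-match. -/
def Rep12 (V : Finset ℕ) (E : ℕ → ℕ → Prop) (w : List ℕ) : Prop :=
  (∀ v ∈ V, v ∈ w) ∧ (∀ a ∈ w, a ∈ V) ∧
    ∀ x ∈ V, ∀ y ∈ V, x ≠ y →
      (E x y ↔ NoMatch12 (w.filter (fun a => a = x ∨ a = y)))

open scoped List

/-!
Write `u ≺ v` for "some occurrence of `u` precedes some occurrence of `v` in `w`". For `u < v`,
the letters `u, v` are adjacent exactly when `¬ u ≺ v`. Along the bad path this gives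
`¬ x₀ ≺ x₁` and `¬ xₛ ≺ xₛ₋₁` from the two end edges, and `x₀ ≺ xₛ₋₁` and `xₛ ≺ x₁` from the
non-edges `x₀xₛ₋₁` and `x₁xₛ`. But whichever of the chosen occurrences of `x₀` and `xₛ` comes
first yields `x₀ ≺ x₁` or `xₛ ≺ xₛ₋₁`.
-/

theorem List.pair_sublist_or_pair_sublist {α : Type*} {a b c d : α} :
    ∀ {w : List α}, [a, b] <+ w → [c, d] <+ w → [a, d] <+ w ∨ [c, b] <+ w
  | [], hab, _ => absurd hab (by simp)
  | _ :: _, .cons _ hab, .cons _ hcd =>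
    (pair_sublist_or_pair_sublist hab hcd).imp (·.cons _) (·.cons _)
  | _ :: _, .cons _ hab, .cons_cons c _ =>
    .inr (((sublist_cons_self a [b]).trans hab).cons_cons c)
  | _ :: _, .cons_cons a _, .cons _ hcd =>
    .inl (((sublist_cons_self c [d]).trans hcd).cons_cons a)
  | _ :: _, .cons_cons a _, .cons_cons _ hd => .inl (hd.cons_cons a)

theorem noMatch12_iff_pairwise {w : List ℕ} : NoMatch12 w ↔ w.Pairwise (· ≥ ·) :=
  List.isChain_iff_pairwise

theorem noMatch12_filter_pair_iff {w : List ℕ} {u v : ℕ} (huv : u < v) :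
    NoMatch12 (w.filter fun a => a = u ∨ a = v) ↔ ¬ [u, v] <+ w := by
  rw [noMatch12_iff_pairwise, List.pairwise_iff_forall_sublist]
  constructor
  · intro hdec huvw
    have := hdec (by simpa using huvw.filter fun a => decide (a = u ∨ a = v))
    omega
  · intro huvw a b hab
    have ha := List.of_mem_filter (hab.subset (by simp : a ∈ [a, b]))
    have hb := List.of_mem_filter (hab.subset (by simp : b ∈ [a, b]))
    simp only [decide_eq_true_eq] at ha hb
    by_contra hlt
    obtain ⟨rfl, rfl⟩ : a = u ∧ b = v := by omega
    exact huvw (hab.trans List.filter_sublist)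

namespace Rep12

variable {V : Finset ℕ} {E : ℕ → ℕ → Prop} {w : List ℕ} {u v : ℕ}

theorem adj_iff_not_sublist (hw : Rep12 V E w) (hu : u ∈ V) (hv : v ∈ V) (huv : u < v) :
    E u v ↔ ¬ [u, v] <+ w :=
  (hw.2.2 u hu v hv huv.ne).trans (noMatch12_filter_pair_iff huv)

theorem adj_swap_iff_not_sublist (hw : Rep12 V E w) (hu : u ∈ V) (hv : v ∈ V) (huv : u < v) :
    E v u ↔ ¬ [u, v] <+ w := by
  rw [hw.2.2 v hv u hu huv.ne', ← noMatch12_filter_pair_iff huv]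
  simp only [or_comm]

end Rep12

theorem stmt_9_general (V : Finset ℕ) (E : ℕ → ℕ → Prop)
    (s : ℕ) (hs : 3 ≤ s) (x : ℕ → ℕ)
    (hmem : ∀ t ≤ s, x t ∈ V)
    (hedge : ∀ t, t < s → E (x t) (x (t + 1)))
    (hnonedge : ∀ a, ∀ b ≤ s, a + 2 ≤ b → ¬ E (x a) (x b))
    (hbad : ∀ t, 0 < t → t < s → x 0 < x t ∧ x s < x t) :
    ¬ ∃ w, Rep12 V E w := by
  rintro ⟨w, hw⟩
  obtain ⟨h01, hs1⟩ := hbad 1 (by omega) (by omega)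
  obtain ⟨h0p, hsp⟩ := hbad (s - 1) (by omega) (by omega)
  have m0 := hmem 0 (by omega)
  have m1 := hmem 1 (by omega)
  have mp := hmem (s - 1) (by omega)
  have ms := hmem s le_rfl
  have first_edge : ¬ [x 0, x 1] <+ w :=
    (hw.adj_iff_not_sublist m0 m1 h01).mp (hedge 0 (by omega))
  have last_edge : ¬ [x s, x (s - 1)] <+ w :=
    (hw.adj_swap_iff_not_sublist ms mp hsp).mp <| by
      simpa [Nat.sub_add_cancel (show 1 ≤ s by omega)] using hedge (s - 1) (by omega)
  have nonedge_left : [x 0, x (s - 1)] <+ w := by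
    by_contra h
    exact hnonedge 0 (s - 1) (by omega) (by omega) ((hw.adj_iff_not_sublist m0 mp h0p).mpr h)
  have nonedge_right : [x s, x 1] <+ w := by
    by_contra h
    exact hnonedge 1 s le_rfl (by omega) ((hw.adj_swap_iff_not_sublist ms m1 hs1).mpr h)
  exact (List.pair_sublist_or_pair_sublist nonedge_right nonedge_left).elim last_edge first_edge

/-- a labeled graph with a "bad path": an induced path
`x₀ x₁ … x_s`, `s ≥ 3`, with `max {x₀, x_s} < min {x₁, …, x_{s−1}}`, is not
12-representable. -/
theorem stmt_9 (V : Finset ℕ) (E : ℕ → ℕ → Prop) (hsym : Symmetric E)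
    (s : ℕ) (hs : 3 ≤ s) (x : ℕ → ℕ)
    (hmem : ∀ t ≤ s, x t ∈ V)
    (hinj : ∀ a ≤ s, ∀ b ≤ s, x a = x b → a = b)
    (hedge : ∀ t, t < s → E (x t) (x (t + 1)))
    (hnonedge : ∀ a, ∀ b ≤ s, a + 2 ≤ b → ¬ E (x a) (x b))
    (hbad : ∀ t, 0 < t → t < s → x 0 < x t ∧ x s < x t) :
    ¬ ∃ w, Rep12 V E w :=
  stmt_9_general V E s hs x hmem hedge hnonedge hbad
end

section
/- Every co-interval graph is 12-representable: if G is a graph on n vertices whose complement is an interval graph, then there is a labeling of the vertices of G by {1,…,n} and a word that 12-represents the labeled graph. -/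
open scoped List

/-!
Label the vertices so that labels decrease as left endpoints increase, and let `w` list the
labels of the `2n` interval endpoints from left to right. For labels `f i < f j` the interval
of `j` starts no later than that of `i`, so the two intervals meet iff `L i ≤ R j`, i.e. iff
some occurrence of `f i` precedes one of `f j` in `w`. Hence non-adjacent vertices (meeting
intervals) produce a 12-match and adjacent ones (disjoint intervals) do not.
-/

theorem List.sublist_map_iff_of_injective {α β : Type*} {f : α → β} (hf : Function.Injective f)
    {l₁ l₂ : List α} : l₁.map f <+ l₂.map f ↔ l₁ <+ l₂ := by
  refine ⟨fun h => ?_, List.Sublist.map f⟩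
  obtain ⟨l', hl', heq⟩ := List.sublist_map_iff.mp h
  rwa [List.map_injective_iff.mpr hf heq]

theorem List.pair_sublist_of_pairwise_le {α β : Type*} [Preorder β] {key : α → β} {l : List α}
    (hl : l.Pairwise (fun a b => key a ≤ key b)) {x y : α} (hx : x ∈ l) (hy : y ∈ l)
    (hxy : key x < key y) : [x, y] <+ l := by
  induction l with
  | nil => simp at hx
  | cons c t ih =>
    rw [List.pairwise_cons] at hl
    rcases List.mem_cons.mp hx with rfl | hxt <;> rcases List.mem_cons.mp hy with rfl | hyt
    · exact absurd hxy (lt_irrefl _)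
    · exact (List.singleton_sublist.mpr hyt).cons_cons x
    · exact absurd (hl.1 x hxt) hxy.not_ge
    · exact (ih hl.2 hxt hyt).cons c

theorem noMatch12_filter_iff_not_sublist {a b : ℕ} (hab : a < b) (w : List ℕ) :
    NoMatch12 (w.filter (fun c => c = a ∨ c = b)) ↔ ¬ [a, b] <+ w := by
  have hmem : ∀ c ∈ w.filter (fun c => c = a ∨ c = b), c = a ∨ c = b := fun c hc =>
    of_decide_eq_true (List.mem_filter.mp hc).2
  have hfilter : [a, b] <+ w.filter (fun c => c = a ∨ c = b) ↔ [a, b] <+ w :=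
    ⟨fun h => h.trans List.filter_sublist,
      fun h => by simpa using h.filter (fun c => decide (c = a ∨ c = b))⟩
  have : IsTrans ℕ (fun p q => q ≤ p) := ⟨fun _ _ _ h₁ h₂ => h₂.trans h₁⟩
  rw [NoMatch12, List.Chain', List.isChain_iff_pairwise, List.pairwise_iff_forall_sublist,
    ← hfilter]
  constructor
  · intro h hab'
    exact absurd (h hab') hab.not_ge
  · intro h x y hxy
    rcases hmem x (hxy.subset (by simp)) with rfl | rfl <;>
      rcases hmem y (hxy.subset (by simp)) with rfl | rfl
    · exact le_rfl
    · exact absurd hxy h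
    · exact hab.le
    · exact le_rfl

theorem rep12_of_sublist_iff {V : Finset ℕ} {E : ℕ → ℕ → Prop} {w : List ℕ}
    (hE : ∀ x y, E x y → E y x) (hV : ∀ v ∈ V, v ∈ w) (hw : ∀ a ∈ w, a ∈ V)
    (hadj : ∀ x ∈ V, ∀ y ∈ V, x < y → (E x y ↔ ¬ [x, y] <+ w)) : Rep12 V E w := by
  refine ⟨hV, hw, fun x hx y hy hxy => ?_⟩
  rcases hxy.lt_or_gt with h | h
  · rw [noMatch12_filter_iff_not_sublist h]
    exact hadj x hx y hy h
  · have hswap : (fun c => decide (c = x ∨ c = y)) = fun c => decide (c = y ∨ c = x) := by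
      funext c
      exact decide_eq_decide.mpr or_comm
    rw [show E x y ↔ E y x from ⟨hE x y, hE y x⟩, hswap, noMatch12_filter_iff_not_sublist h]
    exact hadj y hy x hx h

theorem exists_injective_label_antitone {α : Type*} [LinearOrder α] {n : ℕ} (L : Fin n → α) :
    ∃ f : Fin n → ℕ, Function.Injective f ∧ (∀ i, f i ∈ Finset.Icc 1 n) ∧
      ∀ i j, f i < f j → L j ≤ L i := by
  have hmono := Tuple.monotone_sort (OrderDual.toDual ∘ L)
  generalize Tuple.sort (OrderDual.toDual ∘ L) = σ at hmono
  refine ⟨fun i => σ.symm i + 1, fun i j h => σ.symm.injective (Fin.ext (by simpa using h)),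
    fun i => Finset.mem_Icc.mpr ⟨Nat.le_add_left 1 _, (σ.symm i).isLt⟩, fun i j h => ?_⟩
  have hσ : σ.symm i ≤ σ.symm j := Fin.le_iff_val_le_val.mpr (by simp only at h; omega)
  simpa using hmono hσ

section IntervalEndpoints

variable {ι α : Type*} [Fintype ι] [LinearOrder α] (L R : ι → α)

/-- `(i, false)` and `(i, true)` stand for the left and right endpoint of `[L i, R i]`; at equal
positions a left endpoint comes first, so that touching closed intervals count as meeting. -/
def endpointKey (e : ι × Bool) : α ×ₗ Bool := toLex (cond e.2 (R e.1) (L e.1), e.2)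

noncomputable def endpointOrder : List (ι × Bool) :=
  (Finset.univ : Finset (ι × Bool)).toList.insertionSort
    (fun a b => endpointKey L R a ≤ endpointKey L R b)

noncomputable def endpointWord : List ι := (endpointOrder L R).map Prod.fst

theorem pairwise_endpointOrder :
    (endpointOrder L R).Pairwise (fun a b => endpointKey L R a ≤ endpointKey L R b) := by
  have : Std.Total (fun a b => endpointKey L R a ≤ endpointKey L R b) :=
    ⟨fun _ _ => le_total _ _⟩
  have : IsTrans (ι × Bool) (fun a b => endpointKey L R a ≤ endpointKey L R b) :=
    ⟨fun _ _ _ => le_trans⟩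
  exact List.pairwise_insertionSort _ _

theorem mem_endpointOrder (e : ι × Bool) : e ∈ endpointOrder L R := by
  simp [endpointOrder, (List.perm_insertionSort _ _).mem_iff]

variable {L R}

theorem mem_endpointWord (i : ι) : i ∈ endpointWord L R :=
  List.mem_map_of_mem (mem_endpointOrder L R (i, false))

theorem pair_sublist_endpointWord_iff (hLR : ∀ i, L i ≤ R i) (i j : ι) :
    [i, j] <+ endpointWord L R ↔ L i ≤ R j := by
  constructor
  · intro h
    obtain ⟨l', hl', heq⟩ := List.sublist_map_iff.mp h
    rcases l' with _ | ⟨⟨i', b⟩, _ | ⟨⟨j', b'⟩, _ | _⟩⟩ <;>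
      simp only [List.map_cons, List.map_nil, List.cons.injEq, reduceCtorEq, and_false] at heq
    obtain ⟨rfl, rfl, -⟩ := heq
    have hle : endpointKey L R (i, b) ≤ endpointKey L R (j, b') :=
      List.pairwise_iff_forall_sublist.mp (pairwise_endpointOrder L R) hl'
    have hleft : L i ≤ cond b (R i) (L i) := by cases b <;> simp [hLR]
    have hright : cond b' (R j) (L j) ≤ R j := by cases b' <;> simp [hLR]
    exact hleft.trans ((Prod.Lex.monotone_fst _ _ hle).trans hright)
  · intro h
    have hlt : endpointKey L R (i, false) < endpointKey L R (j, true) := by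
      rw [endpointKey, endpointKey, Prod.Lex.toLex_lt_toLex]
      rcases h.lt_or_eq with h | h
      · exact Or.inl h
      · exact Or.inr ⟨h, Bool.false_lt_true⟩
    simpa [endpointWord] using (List.pair_sublist_of_pairwise_le (pairwise_endpointOrder L R)
      (mem_endpointOrder L R _) (mem_endpointOrder L R _) hlt).map Prod.fst

end IntervalEndpoints

/-- every co-interval graph is 12-representable. If the complement
of `G` is the intersection graph of closed real intervals `[L i, R i]`, then some
injective labeling of the vertices of `G` by `{1,…,n}` admits a 12-representing
word. -/
theorem stmt_15 (n : ℕ) (G : SimpleGraph (Fin n)) (L R : Fin n → ℝ)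
    (hLR : ∀ i, L i < R i)
    (hco : ∀ i j : Fin n, i ≠ j → (¬ G.Adj i j ↔ (L i ≤ R j ∧ L j ≤ R i))) :
    ∃ f : Fin n → ℕ, Function.Injective f ∧ (∀ i, f i ∈ Finset.Icc 1 n) ∧
      ∃ w, Rep12 (Finset.image f Finset.univ)
        (fun a b => ∃ i j : Fin n, a = f i ∧ b = f j ∧ G.Adj i j) w := by
  obtain ⟨f, hf, hf_mem, hf_anti⟩ := exists_injective_label_antitone L
  refine ⟨f, hf, hf_mem, (endpointWord L R).map f, rep12_of_sublist_iff ?_ ?_ ?_ ?_⟩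
  · rintro _ _ ⟨i, j, rfl, rfl, h⟩
    exact ⟨j, i, rfl, rfl, h.symm⟩
  · simp [mem_endpointWord]
  · simp
  · simp only [Finset.mem_image, Finset.mem_univ, true_and]
    rintro _ ⟨i, rfl⟩ _ ⟨j, rfl⟩ hij
    have hne : i ≠ j := by rintro rfl; exact hij.false
    have hRi : L j ≤ R i := (hf_anti i j hij).trans (hLR i).le
    calc (∃ i' j', f i = f i' ∧ f j = f j' ∧ G.Adj i' j') ↔ G.Adj i j := by simp [hf.eq_iff]
      _ ↔ ¬ L i ≤ R j := by rw [← not_iff_not, not_not, hco i j hne, and_iff_left hRi]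
      _ ↔ ¬ [i, j] <+ endpointWord L R := by
        rw [pair_sublist_endpointWord_iff (fun k => (hLR k).le)]
      _ ↔ ¬ [f i, f j] <+ (endpointWord L R).map f := by
        rw [← List.sublist_map_iff_of_injective hf, List.map_cons, List.map_cons, List.map_nil]
end

section
/- If a labeled tree T is 12-representable, then for every vertex v of T, at most two of the connected components of T minus v fail to be 'good', where a component containing neighbor v_i of v is good if it is a star whose center is v_i. -/
/-- `w` 12-represents the graph `G` under the injective labeling `ℓ` of its
vertices by natural numbers: every label occurs in `w`, every letter of `w` is a
label, and for distinct vertices `x, y`: `x y` is an edge iff the subsequence of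
`w` consisting of occurrences of `ℓ x` and `ℓ y` has no 12-match. -/
def Rep12L {α : Type*} [Fintype α] (G : SimpleGraph α) (ℓ : α → ℕ)
    (w : List ℕ) : Prop :=
  Function.Injective ℓ ∧ (∀ v : α, ℓ v ∈ w) ∧ (∀ a ∈ w, ∃ v : α, a = ℓ v) ∧
    ∀ x y : α, x ≠ y →
      (G.Adj x y ↔ NoMatch12 (w.filter (fun a => a = ℓ x ∨ a = ℓ y)))

/-- The component of `T ∖ v` containing the neighbor `u` of `v` (its vertices are
those `x` reachable from `u` by a walk avoiding `v`) is *good*: it is a star with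
center `u`, i.e. every vertex of the component other than `u` is adjacent to `u`,
and no two vertices of the component other than `u` are adjacent. -/
def IsGoodComp {α : Type*} (T : SimpleGraph α) (v u : α) : Prop :=
  (∀ x, (∃ p : T.Walk u x, v ∉ p.support) → (x = u ∨ T.Adj u x)) ∧
    (∀ x y, (∃ p : T.Walk u x, v ∉ p.support) → (∃ q : T.Walk u y, v ∉ q.support) →
      x ≠ u → y ≠ u → ¬ T.Adj x y)

/-!
Record, for every letter of `w`, the first and the last position at which it occurs. For labels
`p < q` the pair is an edge iff every `q` precedes every `p`, so `T` is the comparability graph of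
the order `x ≺ y :⇔ ℓ x < ℓ y` and all occurrences of `ℓ y` precede those of `ℓ x`; this order is
transitive because occurrences span intervals. A bad component at `v` contains an induced path
`v - u - a - b`, along which the orientation of `≺` must alternate. If the first edges of two such
paths are oriented differently, `u₁` and `u₂` become comparable, i.e. adjacent. If they are
oriented alike and `b₁`, `b₂` lie on the same side of `v` in label order, the non-edges `a₁ u₂`,
`a₂ u₁` close a cyclic chain of label or position inequalities. Among three bad components two
have their `b` on the same side of `v`.
-/

namespace List

variable {β : Type*} {a b : β} {w : List β}

lemma pair_sublist_iff_exists_getElem :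
    [a, b] <+ w ↔
      ∃ i j, ∃ (hi : i < w.length) (hj : j < w.length), i < j ∧ w[i] = a ∧ w[j] = b := by
  -- both sides say, negated, that `w` is pairwise related by `fun x y => ¬(x = a ∧ y = b)`
  have h := (pairwise_iff_forall_sublist (R := fun x y => ¬(x = a ∧ y = b))).symm.trans
    (pairwise_iff_getElem (l := w))
  constructor
  · intro hs
    by_contra! hc
    exact h.2 (fun i j hi hj hij hij' => hc i j hi hj hij hij'.1 hij'.2) hs ⟨rfl, rfl⟩
  · rintro ⟨i, j, hi, hj, hij, rfl, rfl⟩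
    by_contra hs
    exact h.1 (fun hxy hab => hs (hab.1 ▸ hab.2 ▸ hxy)) i j hi hj hij ⟨rfl, rfl⟩

variable [BEq β]

def lastIdxOf (a : β) (w : List β) : ℕ := w.length - 1 - w.reverse.idxOf a

lemma lastIdxOf_lt_length (h : a ∈ w) : w.lastIdxOf a < w.length := by
  have := length_pos_of_mem h
  unfold lastIdxOf
  omega

variable [LawfulBEq β]

lemma idxOf_le_of_getElem_eq {i : ℕ} (hi : i < w.length) (h : w[i] = a) : w.idxOf a ≤ i := by
  by_contra! hlt
  have := not_of_lt_findIdx (p := (· == a)) hlt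
  simp_all

lemma le_lastIdxOf_of_getElem_eq {i : ℕ} (hi : i < w.length) (h : w[i] = a) :
    i ≤ w.lastIdxOf a := by
  have hi' : w.length - 1 - i < w.reverse.length := by simp; omega
  have := idxOf_le_of_getElem_eq (a := a) hi' (by rw [getElem_reverse]; convert h using 2; omega)
  unfold lastIdxOf
  omega

lemma getElem_lastIdxOf (h : a ∈ w) : w[w.lastIdxOf a]'(lastIdxOf_lt_length h) = a := by
  have hr : w.reverse.idxOf a < w.reverse.length := idxOf_lt_length_iff.2 (mem_reverse.2 h)
  have := getElem_idxOf hr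
  rw [getElem_reverse] at this
  simpa [lastIdxOf] using this

lemma idxOf_le_lastIdxOf (h : a ∈ w) : w.idxOf a ≤ w.lastIdxOf a :=
  idxOf_le_of_getElem_eq _ (getElem_lastIdxOf h)

lemma pair_sublist_iff_idxOf_lt_lastIdxOf (ha : a ∈ w) (hb : b ∈ w) :
    [a, b] <+ w ↔ w.idxOf a < w.lastIdxOf b := by
  rw [pair_sublist_iff_exists_getElem]
  constructor
  · rintro ⟨i, j, hi, hj, hij, hia, hjb⟩
    exact (idxOf_le_of_getElem_eq hi hia).trans_lt
      (hij.trans_le (le_lastIdxOf_of_getElem_eq hj hjb))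
  · exact fun h => ⟨_, _, _, _, h, getElem_idxOf (idxOf_lt_length_iff.2 ha), getElem_lastIdxOf hb⟩

end List

open List in
lemma noMatch12_filter_iff {p q : ℕ} (hpq : p < q) (w : List ℕ) :
    NoMatch12 (w.filter (fun a => a = p ∨ a = q)) ↔ ¬[p, q] <+ w := by
  change List.IsChain _ _ ↔ _
  rw [isChain_iff_pairwise, pairwise_iff_forall_sublist]
  constructor
  · intro h hs
    have := h (by simpa using hs.filter (fun a => decide (a = p ∨ a = q)))
    omega
  · intro h x y hxy
    have hx := of_mem_filter (hxy.subset (by simp : x ∈ [x, y]))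
    have hy := of_mem_filter (hxy.subset (by simp : y ∈ [x, y]))
    by_contra! hlt
    simp only [decide_eq_true_eq] at hx hy
    obtain ⟨rfl, rfl⟩ : x = p ∧ y = q := by omega
    exact h (hxy.trans filter_sublist)

namespace SimpleGraph

structure IsInducedP4 {α : Type*} (G : SimpleGraph α) (v u a b : α) : Prop where
  adj_vu : G.Adj v u
  adj_ua : G.Adj u a
  adj_ab : G.Adj a b
  not_adj_va : ¬G.Adj v a
  not_adj_ub : ¬G.Adj u b
  not_adj_vb : ¬G.Adj v b

namespace IsAcyclic

variable {V : Type*} {G : SimpleGraph V}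

lemma mem_edges_of_adj (hG : G.IsAcyclic) {x y : V} (h : G.Adj x y) (p : G.Walk x y) :
    s(x, y) ∈ p.edges :=
  isBridge_iff_forall_walk_mem_edges.1 (isAcyclic_iff_forall_adj_isBridge.1 hG h) p

lemma not_adj_of_adj_of_adj (hG : G.IsAcyclic) {x y z : V} (hxy : G.Adj x y)
    (hyz : G.Adj y z) : ¬G.Adj x z :=
  fun hxz => by
    have := hG.mem_edges_of_adj hxz (.cons hxy (.cons hyz .nil))
    simp only [Walk.edges_cons, Walk.edges_nil, List.mem_cons, Sym2.congr_left, Sym2.congr_right,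
      List.not_mem_nil, or_false] at this
    rcases this with h | h
    exacts [hyz.ne h.symm, hxy.ne h]

lemma not_adj_of_adj_of_adj_of_adj (hG : G.IsAcyclic) {x y z t : V} (hxy : G.Adj x y)
    (hyz : G.Adj y z) (hzt : G.Adj z t) (hxz : x ≠ z) (hyt : y ≠ t) : ¬G.Adj x t :=
  fun hxt => by
    have := hG.mem_edges_of_adj hxt (.cons hxy (.cons hyz (.cons hzt .nil)))
    simp only [Walk.edges_cons, Walk.edges_nil, List.mem_cons, Sym2.congr_left, Sym2.congr_right,
      Sym2.eq_iff, List.not_mem_nil, or_false] at this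
    rcases this with h | (⟨h, -⟩ | ⟨h, -⟩) | h
    exacts [hyt h.symm, hxy.ne h, hxz h, hxz h]

lemma mem_support_of_adj_of_adj (hG : G.IsAcyclic) {v u₁ u₂ : V} (h₁ : G.Adj v u₁)
    (h₂ : G.Adj v u₂) (hne : u₁ ≠ u₂) (p : G.Walk u₁ u₂) : v ∈ p.support := by
  have := hG.mem_edges_of_adj h₁ (.cons h₂ p.reverse)
  rw [Walk.edges_cons, List.mem_cons, Sym2.congr_right] at this
  rcases this with h | h
  · exact absurd h hne
  · simpa using p.reverse.fst_mem_support_of_mem_edges h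

lemma not_adj_of_walks_avoiding (hG : G.IsAcyclic) {v u₁ u₂ x y : V} (h₁ : G.Adj v u₁)
    (h₂ : G.Adj v u₂) (hne : u₁ ≠ u₂) (p : G.Walk u₁ x) (hp : v ∉ p.support)
    (q : G.Walk u₂ y) (hq : v ∉ q.support) : ¬G.Adj x y := fun hxy => by
  have := hG.mem_support_of_adj_of_adj h₁ h₂ hne (p.append (.cons hxy q.reverse))
  simp_all [Walk.mem_support_append_iff]

lemma exists_avoiding_not_adj_of_not_isGoodComp (hG : G.IsAcyclic) {v u : V}
    (hbad : ¬IsGoodComp G v u) :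
    ∃ x, (∃ p : G.Walk u x, v ∉ p.support) ∧ x ≠ u ∧ ¬G.Adj u x := by
  simp only [IsGoodComp, not_and_or, not_forall, not_or, not_not, exists_prop] at hbad
  rcases hbad with ⟨x, hx, hxu, hux⟩ | ⟨x, y, hx, hy, hxu, hyu, hxy⟩
  · exact ⟨x, hx, hxu, hux⟩
  · by_cases hux : G.Adj u x
    · exact ⟨y, hy, hyu, hG.not_adj_of_adj_of_adj hux hxy⟩
    · exact ⟨x, hx, hxu, hux⟩

lemma exists_isInducedP4_of_not_isGoodComp (hG : G.IsAcyclic) {v u : V} (hvu : G.Adj v u)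
    (hbad : ¬IsGoodComp G v u) :
    ∃ a b, (∃ p : G.Walk u a, v ∉ p.support) ∧ G.IsInducedP4 v u a b := by
  classical
  obtain ⟨x, ⟨p, hp⟩, hxu, hux⟩ := hG.exists_avoiding_not_adj_of_not_isGoodComp hbad
  have hq := p.bypass_isPath
  have hqv : v ∉ p.bypass.support := fun h => hp (p.support_bypass_subset_support h)
  generalize p.bypass = q at hq hqv
  match q, hq, hqv with
  | .nil, _, _ => exact absurd rfl hxu
  | .cons h .nil, _, _ => exact absurd h hux
  | .cons (v := a) hua (.cons (v := b) hab q), hq, hqv =>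
    have hub : u ≠ b := by
      rintro rfl
      exact ((Walk.cons_isPath_iff _ _).1 hq).2 (by simp)
    simp only [Walk.support_cons, List.mem_cons, not_or] at hqv
    exact ⟨_, _, ⟨.cons hua .nil, by simp [hvu.ne, hqv.2.1]⟩, hvu, hua, hab,
      hG.not_adj_of_adj_of_adj hvu hua, hG.not_adj_of_adj_of_adj hua hab,
      hG.not_adj_of_adj_of_adj_of_adj hvu hua hab hqv.2.1 hub⟩

end IsAcyclic
end SimpleGraph

structure LabeledIntervals (α β γ : Type*) [LinearOrder β] [LinearOrder γ] where
  label : α → β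
  left : α → γ
  right : α → γ
  left_le_right : ∀ x, left x ≤ right x

namespace LabeledIntervals

variable {α β γ : Type*} [LinearOrder β] [LinearOrder γ] (I : LabeledIntervals α β γ)

def Below (x y : α) : Prop := I.label x < I.label y ∧ I.right y ≤ I.left x

def graph : SimpleGraph α where
  Adj x y := I.Below x y ∨ I.Below y x
  symm := ⟨fun _ _ => Or.symm⟩
  loopless := ⟨fun _ h => by rcases h with h | h <;> exact lt_irrefl _ h.1⟩

variable {I}

lemma graph_adj {x y : α} : I.graph.Adj x y ↔ I.Below x y ∨ I.Below y x := Iff.rfl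

lemma Below.trans {x y z : α} (hxy : I.Below x y) (hyz : I.Below y z) : I.Below x z :=
  ⟨hxy.1.trans hyz.1, hyz.2.trans ((I.left_le_right y).trans hxy.2)⟩

variable (I) in
def dual : LabeledIntervals α βᵒᵈ γᵒᵈ where
  label := OrderDual.toDual ∘ I.label
  left := OrderDual.toDual ∘ I.right
  right := OrderDual.toDual ∘ I.left
  left_le_right x := I.left_le_right x

lemma dual_below {x y : α} : I.dual.Below x y ↔ I.Below y x := Iff.rfl

@[simp]
lemma dual_graph : I.dual.graph = I.graph := by
  ext x y
  exact Or.comm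

lemma below_below_or_of_adj_of_adj {x y z : α} (hxy : I.graph.Adj x y)
    (hyz : I.graph.Adj y z) (hxz : ¬I.graph.Adj x z) :
    (I.Below x y ∧ I.Below z y) ∨ (I.Below y x ∧ I.Below y z) := by
  rcases hxy with hxy | hxy <;> rcases hyz with hyz | hyz
  · exact absurd (Or.inl (hxy.trans hyz)) hxz
  · exact Or.inl ⟨hxy, hyz⟩
  · exact Or.inr ⟨hxy, hyz⟩
  · exact absurd (Or.inr (hyz.trans hxy)) hxz

lemma below_below_of_isInducedP4 {v u a b : α} (h : I.graph.IsInducedP4 v u a b)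
    (huv : I.Below u v) : I.Below u a ∧ I.Below b a := by
  have asymm {x y : α} (h : I.Below x y) (h' : I.Below y x) : False := lt_asymm h.1 h'.1
  have hua : I.Below u a := by
    rcases below_below_or_of_adj_of_adj h.adj_vu h.adj_ua h.not_adj_va with ⟨hvu, -⟩ | ⟨-, hua⟩
    · exact (asymm huv hvu).elim
    · exact hua
  rcases below_below_or_of_adj_of_adj h.adj_ua h.adj_ab h.not_adj_ub with ⟨-, hba⟩ | ⟨hau, -⟩
  · exact ⟨hua, hba⟩
  · exact (asymm hua hau).elim

lemma false_of_isInducedP4_of_below {v u₁ a₁ b₁ u₂ a₂ b₂ : α}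
    (h₁ : I.graph.IsInducedP4 v u₁ a₁ b₁) (h₂ : I.graph.IsInducedP4 v u₂ a₂ b₂)
    (hu₁ : I.Below u₁ v) (hu₂ : I.Below u₂ v)
    (ha₁ : ¬I.graph.Adj a₁ u₂) (ha₂ : ¬I.graph.Adj a₂ u₁)
    (hb : (I.label b₁ < I.label v ∧ I.label b₂ < I.label v) ∨
      (I.label v < I.label b₁ ∧ I.label v < I.label b₂)) : False := by
  obtain ⟨⟨hlu₁a, hra₁u⟩, ⟨hlb₁a, hra₁b⟩⟩ := below_below_of_isInducedP4 h₁ hu₁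
  obtain ⟨⟨hlu₂a, hra₂u⟩, ⟨hlb₂a, hra₂b⟩⟩ := below_below_of_isInducedP4 h₂ hu₂
  rcases hb with ⟨hb₁, hb₂⟩ | ⟨hb₁, hb₂⟩
  · have hbv₁ : I.left b₁ < I.right v := not_le.1 fun h => h₁.not_adj_vb (Or.inr ⟨hb₁, h⟩)
    have hbv₂ : I.left b₂ < I.right v := not_le.1 fun h => h₂.not_adj_vb (Or.inr ⟨hb₂, h⟩)
    have hau₁ : I.label a₁ ≤ I.label u₂ := not_lt.1 fun h =>
      ha₁ (Or.inr ⟨h, hra₁b.trans (hbv₁.le.trans hu₂.2)⟩)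
    have hau₂ : I.label a₂ ≤ I.label u₁ := not_lt.1 fun h =>
      ha₂ (Or.inr ⟨h, hra₂b.trans (hbv₂.le.trans hu₁.2)⟩)
    exact (((hau₁.trans_lt hlu₂a).trans_le hau₂).trans hlu₁a).false
  · have hua₁ : I.left u₂ < I.right a₁ := not_le.1 fun h =>
      ha₁ (Or.inr ⟨hu₂.1.trans (hb₁.trans hlb₁a), h⟩)
    have hua₂ : I.left u₁ < I.right a₂ := not_le.1 fun h =>
      ha₂ (Or.inr ⟨hu₁.1.trans (hb₂.trans hlb₂a), h⟩)
    exact (((hua₁.trans_le hra₁u).trans hua₂).trans_le hra₂u).false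

lemma false_of_two_isInducedP4 {v u₁ a₁ b₁ u₂ a₂ b₂ : α}
    (h₁ : I.graph.IsInducedP4 v u₁ a₁ b₁) (h₂ : I.graph.IsInducedP4 v u₂ a₂ b₂)
    (hu : ¬I.graph.Adj u₁ u₂) (ha₁ : ¬I.graph.Adj a₁ u₂) (ha₂ : ¬I.graph.Adj a₂ u₁)
    (hb : (I.label b₁ < I.label v ∧ I.label b₂ < I.label v) ∨
      (I.label v < I.label b₁ ∧ I.label v < I.label b₂)) : False := by
  rcases h₁.adj_vu with hvu₁ | hu₁v <;> rcases h₂.adj_vu with hvu₂ | hu₂v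
  · -- in the dual both orders are reversed: now `u₁, u₂` lie below `v`, and the sides of `v` swap
    rw [← dual_graph] at h₁ h₂ hu ha₁ ha₂
    exact false_of_isInducedP4_of_below h₁ h₂ (dual_below.2 hvu₁) (dual_below.2 hvu₂) ha₁ ha₂
      hb.symm
  · exact hu (Or.inr (hu₂v.trans hvu₁))
  · exact hu (Or.inl (hu₁v.trans hvu₂))
  · exact false_of_isInducedP4_of_below h₁ h₂ hu₁v hu₂v ha₁ ha₂ hb

lemma false_of_three_isInducedP4 (hl : Function.Injective I.label) {v : α} {u a b : Fin 3 → α}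
    (hP4 : ∀ i, I.graph.IsInducedP4 v (u i) (a i) (b i))
    (hcross : ∀ i j, i ≠ j → ¬I.graph.Adj (u i) (u j) ∧ ¬I.graph.Adj (a i) (u j)) : False := by
  obtain ⟨i, j, hij, hside⟩ :=
    Fintype.exists_ne_map_eq_of_card_lt (fun i => decide (I.label (b i) < I.label v)) (by simp)
  have hne (k : Fin 3) : I.label (b k) ≠ I.label v := fun h =>
    (hP4 k).not_adj_va (by simpa [hl h] using (hP4 k).adj_ab.symm)
  refine false_of_two_isInducedP4 (hP4 i) (hP4 j) (hcross i j hij).1 (hcross i j hij).2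
    (hcross j i hij.symm).2 ?_
  simp only [decide_eq_decide] at hside
  rcases (hne i).lt_or_gt with h | h
  · exact Or.inl ⟨h, hside.1 h⟩
  · exact Or.inr ⟨h, (hne j).lt_or_gt.resolve_left (mt hside.2 (not_lt.2 h.le))⟩

end LabeledIntervals

namespace Rep12L

variable {α : Type*} [Fintype α] {T : SimpleGraph α} {ℓ : α → ℕ} {w : List ℕ}

lemma injective (hrep : Rep12L T ℓ w) : Function.Injective ℓ := hrep.1

lemma label_mem (hrep : Rep12L T ℓ w) (x : α) : ℓ x ∈ w := hrep.2.1 x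

def intervals (hrep : Rep12L T ℓ w) : LabeledIntervals α ℕ ℕ where
  label := ℓ
  left x := w.idxOf (ℓ x)
  right x := w.lastIdxOf (ℓ x)
  left_le_right x := List.idxOf_le_lastIdxOf (hrep.label_mem x)

lemma adj_iff_below_of_lt (hrep : Rep12L T ℓ w) {x y : α} (hxy : ℓ x < ℓ y) :
    T.Adj x y ↔ hrep.intervals.Below x y := by
  rw [hrep.2.2.2 x y (fun h => hxy.ne (congrArg ℓ h)), noMatch12_filter_iff hxy,
    List.pair_sublist_iff_idxOf_lt_lastIdxOf (hrep.label_mem x) (hrep.label_mem y), not_lt]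
  exact (and_iff_right hxy).symm

lemma intervals_graph (hrep : Rep12L T ℓ w) : hrep.intervals.graph = T := by
  ext x y
  rw [LabeledIntervals.graph_adj]
  rcases lt_trichotomy (ℓ x) (ℓ y) with h | h | h
  · rw [hrep.adj_iff_below_of_lt h, or_iff_left fun h' => lt_asymm h h'.1]
  · obtain rfl := hrep.injective h
    simp [LabeledIntervals.Below]
  · rw [T.adj_comm, hrep.adj_iff_below_of_lt h, or_iff_right fun h' => lt_asymm h h'.1]

lemma false_of_three_not_isGoodComp (hrep : Rep12L T ℓ w) (hT : T.IsAcyclic) {v x y z : α}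
    (hxy : x ≠ y) (hxz : x ≠ z) (hyz : y ≠ z) (hx : T.Adj v x ∧ ¬IsGoodComp T v x)
    (hy : T.Adj v y ∧ ¬IsGoodComp T v y) (hz : T.Adj v z ∧ ¬IsGoodComp T v z) : False := by
  set u : Fin 3 → α := ![x, y, z]
  have hu : Function.Injective u := by
    intro i j
    fin_cases i <;> fin_cases j <;> simp [u, hxy, hxz, hyz, hxy.symm, hxz.symm, hyz.symm]
  have hbad (i : Fin 3) : T.Adj v (u i) ∧ ¬IsGoodComp T v (u i) := by
    fin_cases i
    exacts [hx, hy, hz]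
  choose a b hwalk hP4 using fun i => hT.exists_isInducedP4_of_not_isGoodComp (hbad i).1 (hbad i).2
  rw [← hrep.intervals_graph] at hP4
  refine hrep.intervals.false_of_three_isInducedP4 hrep.injective hP4 fun i j hij => ?_
  rw [hrep.intervals_graph]
  obtain ⟨p, hp⟩ := hwalk i
  have hnil (k : Fin 3) : v ∉ (SimpleGraph.Walk.nil : T.Walk (u k) (u k)).support := by
    simpa using (hbad k).1.ne
  exact ⟨hT.not_adj_of_walks_avoiding (hbad i).1 (hbad j).1 (hu.ne hij) .nil (hnil i) .nil (hnil j),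
    hT.not_adj_of_walks_avoiding (hbad i).1 (hbad j).1 (hu.ne hij) p hp .nil (hnil j)⟩

end Rep12L

theorem stmt_17_general {α : Type*} [Fintype α]
    (T : SimpleGraph α) (hT : T.IsTree) (ℓ : α → ℕ)
    (w : List ℕ) (hrep : Rep12L T ℓ w) (v : α) :
    ∃ S : Finset α, S.card ≤ 2 ∧
      ∀ u : α, T.Adj v u → u ∉ S → IsGoodComp T v u := by
  classical
  refine ⟨({u | T.Adj v u ∧ ¬IsGoodComp T v u} : Finset α), ?_,
    fun u hu huS => by_contra fun hbad => huS (by simp [hu, hbad])⟩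
  by_contra! hcard
  obtain ⟨x, y, z, hx, hy, hz, hxy, hxz, hyz⟩ := Finset.two_lt_card_iff.1 hcard
  simp only [Finset.mem_filter, Finset.mem_univ, true_and] at hx hy hz
  exact hrep.false_of_three_not_isGoodComp hT.isAcyclic hxy hxz hyz hx hy hz

/-- if a labeled tree `T` is 12-representable, then for every vertex
`v`, at most two of the components of `T ∖ v` fail to be good. -/
theorem stmt_17 {α : Type*} [Fintype α] [DecidableEq α]
    (T : SimpleGraph α) (hT : T.IsTree) (ℓ : α → ℕ)
    (w : List ℕ) (hrep : Rep12L T ℓ w) (v : α) :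
    ∃ S : Finset α, S.card ≤ 2 ∧
      ∀ u : α, T.Adj v u → u ∉ S → IsGoodComp T v u :=
  stmt_17_general T hT ℓ w hrep v
end

section
/- A tree T is 12-representable (some labeling of its vertices by distinct positive integers admits a 12-representing word) if and only if T is a double caterpillar, i.e., there exists a path P in T such that every vertex of T is within distance 2 of P. -/
/-!
Both directions go through interval models. Recording for every vertex the first and the last
occurrence of its label, a 12-representation becomes an assignment of intervals and labels in
which two vertices are adjacent iff their intervals are disjoint and the one with the larger label
lies to the left; conversely such a model is read back as a word.

If no path is within distance `2` of every vertex, take a longest path and a vertex at distance at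
least `3` from it: the two halves of the path at the nearest point and a shortest path to that
vertex form an induced spider `S(3,3,3)`. The spider has no interval model: the neighbours of the
centre all lie on one side of it, by symmetry on the right; then the second vertex of each leg lies
to the left of both its neighbours, and the leg lying between the other two forces a cyclic chain of
label inequalities.

Conversely, a double caterpillar embeds as an induced subgraph into an explicit infinite double
caterpillar, for which an interval model with lexicographically ordered positions and labels is
written down.
-/

open SimpleGraph

section IntervalModel

variable {α L P : Type*} [LinearOrder L] [LinearOrder P]

def IntervalAdj (ℓ : α → L) (s e : α → P) (x y : α) : Prop :=
  ℓ x < ℓ y ∧ e y < s x ∨ ℓ y < ℓ x ∧ e x < s y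

/-- Vertex `v` is the interval `[s v, e v]` carrying the label `ℓ v`; two vertices are adjacent
iff their intervals are disjoint and the one with the larger label lies to the left. -/
structure IsIntervalModel (G : SimpleGraph α) (ℓ : α → L) (s e : α → P) : Prop where
  le : ∀ v, s v ≤ e v
  adj_iff : ∀ ⦃x y⦄, x ≠ y → (G.Adj x y ↔ IntervalAdj ℓ s e x y)

lemma intervalAdj_congr {L' P' : Type*} [LinearOrder L'] [LinearOrder P']
    {ℓ : α → L} {s e : α → P} {ℓ' : α → L'} {s' e' : α → P'}
    (hℓ : ∀ x y, ℓ' x < ℓ' y ↔ ℓ x < ℓ y) (hse : ∀ x y, e' x < s' y ↔ e x < s y) :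
    IntervalAdj ℓ' s' e' = IntervalAdj ℓ s e := by
  ext x y
  simp only [IntervalAdj, hℓ, hse]

lemma intervalAdj_neg (ℓ s e : α → ℤ) : IntervalAdj (-ℓ) (-e) (-s) = IntervalAdj ℓ s e := by
  ext x y
  simp only [IntervalAdj, Pi.neg_apply, neg_lt_neg_iff]
  tauto

end IntervalModel

section Words

structure IsSpan (w : List ℕ) (a i j : ℕ) : Prop where
  first : ∃ h : i < w.length, w[i] = a
  last : ∃ h : j < w.length, w[j] = a
  bounds : ∀ k (hk : k < w.length), w[k] = a → i ≤ k ∧ k ≤ j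

lemma exists_isSpan {w : List ℕ} {a : ℕ} (h : a ∈ w) : ∃ i j, IsSpan w a i j := by
  classical
  have hex : ∃ i, ∃ _ : i < w.length, w[i] = a := List.getElem_of_mem h
  refine ⟨Nat.find hex, Nat.findGreatest (fun i => ∃ _ : i < w.length, w[i] = a) w.length,
    Nat.find_spec hex, ?_, fun k hk hka => ⟨Nat.find_min' hex ⟨hk, hka⟩, ?_⟩⟩
  · obtain ⟨i, hi, hia⟩ := hex
    exact Nat.findGreatest_spec (P := fun i => ∃ _ : i < w.length, w[i] = a) hi.le ⟨hi, hia⟩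
  · exact Nat.le_findGreatest hk.le ⟨hk, hka⟩

lemma noMatch12_filter_iff_s18 (w : List ℕ) (p : ℕ → Prop) [DecidablePred p] :
    NoMatch12 (w.filter (fun a => p a)) ↔
      ∀ i j (hi : i < w.length) (hj : j < w.length), i < j → p w[i] → p w[j] → w[j] ≤ w[i] := by
  change List.IsChain (fun a b : ℕ => b ≤ a) _ ↔ _
  rw [List.isChain_iff_pairwise, List.pairwise_filter, List.pairwise_iff_getElem]
  simp only [decide_eq_true_eq]

lemma noMatch12_filter_pair_iff_s18 {w : List ℕ} {a b i j i' j' : ℕ} (ha : IsSpan w a i j)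
    (hb : IsSpan w b i' j') (hab : a < b) :
    NoMatch12 (w.filter (fun c => c = a ∨ c = b)) ↔ j' < i := by
  rw [noMatch12_filter_iff_s18]
  obtain ⟨hi, hia⟩ := ha.first
  obtain ⟨hj', hj'b⟩ := hb.last
  constructor
  · intro H
    by_contra! hle
    rcases hle.lt_or_eq with hlt | rfl
    · have := H i j' hi hj' hlt (.inl hia) (.inr hj'b)
      omega
    · omega
  · rintro hlt k k' hk hk' hkk' (hka | hkb) (hk'a | hk'b)
    · omega
    · have := (ha.bounds k hk hka).1
      have := (hb.bounds k' hk' hk'b).2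
      omega
    · omega
    · omega

variable {α : Type*} [Fintype α] {G : SimpleGraph α} {ℓ : α → ℕ} {w : List ℕ}

lemma rep12L_iff_of_isSpan {s e : α → ℕ} (hinj : Function.Injective ℓ)
    (hletter : ∀ a ∈ w, ∃ v, a = ℓ v) (hspan : ∀ v, IsSpan w (ℓ v) (s v) (e v)) :
    Rep12L G ℓ w ↔ ∀ x y, x ≠ y → (G.Adj x y ↔ IntervalAdj ℓ s e x y) := by
  have hmem : ∀ v, ℓ v ∈ w := fun v => by
    obtain ⟨h, hv⟩ := (hspan v).first
    exact hv ▸ List.getElem_mem h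
  have hpair : ∀ x y, x ≠ y →
      (NoMatch12 (w.filter (fun a => a = ℓ x ∨ a = ℓ y)) ↔ IntervalAdj ℓ s e x y) := by
    intro x y hxy
    rcases lt_or_gt_of_ne (hinj.ne hxy) with hlt | hlt
    · rw [noMatch12_filter_pair_iff_s18 (hspan x) (hspan y) hlt, IntervalAdj]
      constructor
      · exact fun h => .inl ⟨hlt, h⟩
      · rintro (⟨-, h⟩ | ⟨h, -⟩)
        · exact h
        · omega
    · simp_rw [or_comm (a := _ = ℓ x)]
      rw [noMatch12_filter_pair_iff_s18 (hspan y) (hspan x) hlt, IntervalAdj]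
      constructor
      · exact fun h => .inr ⟨hlt, h⟩
      · rintro (⟨h, -⟩ | ⟨-, h⟩)
        · omega
        · exact h
  refine ⟨fun h x y hxy => (h.2.2.2 x y hxy).trans (hpair x y hxy),
    fun h => ⟨hinj, hmem, hletter, fun x y hxy => (h x y hxy).trans (hpair x y hxy).symm⟩⟩

lemma Rep12L.exists_isIntervalModel (h : Rep12L G ℓ w) :
    ∃ s e : α → ℕ, IsIntervalModel G ℓ s e := by
  choose s e hspan using fun v => exists_isSpan (h.2.1 v)
  refine ⟨s, e, fun v => ?_, (rep12L_iff_of_isSpan h.1 h.2.2.1 hspan).1 h⟩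
  obtain ⟨hj, hja⟩ := (hspan v).last
  exact ((hspan v).bounds _ hj hja).1

lemma IsIntervalModel.exists_rep12L {P : Type*} [LinearOrder P] {s e : α → P}
    (h : IsIntervalModel G ℓ s e) (hinj : Function.Injective ℓ) : ∃ w, Rep12L G ℓ w := by
  classical
  -- read the endpoints of all intervals from left to right, breaking ties by label
  let E : Finset (P ×ₗ ℕ) := Finset.univ.image (fun v => toLex (s v, ℓ v)) ∪
    Finset.univ.image (fun v => toLex (e v, ℓ v))
  let f := E.orderEmbOfFin rfl
  let w := List.ofFn fun k => (ofLex (f k)).2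
  have hrange : ∀ t ∈ E, ∃ k, f k = t := fun t ht => by
    rwa [← Set.mem_range, Finset.range_orderEmbOfFin]
  choose ks hks using fun v =>
    hrange _ (Finset.mem_union_left _ (Finset.mem_image_of_mem _ (Finset.mem_univ v)))
  choose ke hke using fun v =>
    hrange _ (Finset.mem_union_right _ (Finset.mem_image_of_mem _ (Finset.mem_univ v)))
  have hw : ∀ k (hk : k < w.length), w[k] = (ofLex (f ⟨k, by simpa [w] using hk⟩)).2 := by
    simp [w]
  have hlen : w.length = E.card := by simp [w]
  have hspan : ∀ v, IsSpan w (ℓ v) (ks v) (ke v) := by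
    intro v
    refine ⟨⟨by simp [hlen], by simp [hw, hks]⟩, ⟨by simp [hlen], by simp [hw, hke]⟩, ?_⟩
    intro k hk hkv
    rw [hw] at hkv
    have hmem : f ⟨k, by omega⟩ ∈ E := Finset.orderEmbOfFin_mem E rfl _
    simp only [E, Finset.mem_union, Finset.mem_image, Finset.mem_univ, true_and] at hmem
    have hsle : toLex (s v, ℓ v) ≤ toLex (e v, ℓ v) := Prod.Lex.toLex_mono ⟨h.le v, le_rfl⟩
    have hle : ∀ a b : Fin E.card, (a : ℕ) ≤ b ↔ f a ≤ f b := fun a b => f.le_iff_le.symm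
    rcases hmem with ⟨u, hu⟩ | ⟨u, hu⟩ <;> rw [← hu] at hkv <;> obtain rfl : u = v := hinj hkv
    · exact ⟨(hle _ ⟨k, _⟩).2 (by rw [hks, ← hu]), (hle ⟨k, _⟩ _).2 (by rw [hke, ← hu]; exact hsle)⟩
    · exact ⟨(hle _ ⟨k, _⟩).2 (by rw [hks, ← hu]; exact hsle), (hle ⟨k, _⟩ _).2 (by rw [hke, ← hu])⟩
  refine ⟨w, (rep12L_iff_of_isSpan hinj ?_ hspan).2 fun x y hxy => (h.adj_iff hxy).trans ?_⟩
  · intro a ha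
    obtain ⟨k, hk, rfl⟩ := List.getElem_of_mem ha
    have hmem : f ⟨k, by omega⟩ ∈ E := Finset.orderEmbOfFin_mem E rfl _
    simp only [E, Finset.mem_union, Finset.mem_image, Finset.mem_univ, true_and] at hmem
    rw [hw]
    rcases hmem with ⟨u, hu⟩ | ⟨u, hu⟩ <;> exact ⟨u, by rw [← hu]; rfl⟩
  · have key : ∀ x y, (ke y : ℕ) < ks x ↔ e y < s x ∨ e y = s x ∧ ℓ y < ℓ x := by
      intro x y
      rw [← Fin.lt_def, ← f.lt_iff_lt, hks, hke, Prod.Lex.toLex_lt_toLex]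
    simp only [IntervalAdj, key]
    grind

end Words

lemma exists_pos_nat_lt_iff {α Q : Type*} [Fintype α] [LinearOrder Q] (L : α → Q) :
    ∃ ℓ : α → ℕ, (∀ v, 0 < ℓ v) ∧ ∀ x y, ℓ x < ℓ y ↔ L x < L y := by
  classical
  refine ⟨fun v => (Finset.univ.filter fun u => L u < L v).card + 1, fun v => Nat.succ_pos _,
    fun x y => ?_⟩
  simp only [add_lt_add_iff_right]
  constructor
  · intro h
    by_contra! hle
    refine (Finset.card_le_card fun u hu => ?_).not_gt h
    simp only [Finset.mem_filter, Finset.mem_univ, true_and] at hu ⊢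
    exact hu.trans_le hle
  · intro h
    refine Finset.card_lt_card ((Finset.ssubset_iff_of_subset fun u hu => ?_).2 ⟨x, ?_, ?_⟩)
    · simp only [Finset.mem_filter, Finset.mem_univ, true_and] at hu ⊢
      exact hu.trans h
    · simpa using h
    · simp

/-- Distance in the spider `S(3,3,3)` between vertex `k` of leg `i` and vertex `k'` of leg `i'`;
vertex `0` of every leg is the centre. -/
def spiderDist (i i' : Fin 3) (k k' : ℕ) : ℕ := if i = i' then k - k' + (k' - k) else k + k'

/-- The vertices `x i k` (`k ≤ 3`) form an induced copy of `S(3,3,3)` for the relation `R`. -/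
def IsSpider {ι : Type*} (R : ι → ι → Prop) (x : Fin 3 → ℕ → ι) : Prop :=
  ∀ i i' k k', k ≤ 3 → k' ≤ 3 → 0 < spiderDist i i' k k' →
    x i k ≠ x i' k' ∧ (R (x i k) (x i' k') ↔ spiderDist i i' k k' = 1)

lemma Fin.exists_chain_of_total (D : Fin 3 → Fin 3 → Prop)
    (h : ∀ i j, i ≠ j → D i j ∨ D j i) : ∃ i j k, i ≠ j ∧ j ≠ k ∧ D i j ∧ D j k := by
  rcases h 0 1 (by decide) with h01 | h10 <;> rcases h 1 2 (by decide) with h12 | h21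
  · exact ⟨0, 1, 2, by decide, by decide, h01, h12⟩
  · rcases h 0 2 (by decide) with h02 | h20
    · exact ⟨0, 2, 1, by decide, by decide, h02, h21⟩
    · exact ⟨2, 0, 1, by decide, by decide, h20, h01⟩
  · rcases h 0 2 (by decide) with h02 | h20
    · exact ⟨1, 0, 2, by decide, by decide, h10, h02⟩
    · exact ⟨1, 2, 0, by decide, by decide, h12, h20⟩
  · exact ⟨2, 1, 0, by decide, by decide, h21, h10⟩

namespace IsSpider

variable {ι : Type*} {R : ι → ι → Prop} {x : Fin 3 → ℕ → ι}

lemma rel (hx : IsSpider R x) {i i' : Fin 3} {k k' : ℕ} (hk : k ≤ 3) (hk' : k' ≤ 3)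
    (h : spiderDist i i' k k' = 1) : R (x i k) (x i' k') :=
  (hx i i' k k' hk hk' (by omega)).2.2 h

lemma not_rel (hx : IsSpider R x) {i i' : Fin 3} {k k' : ℕ} (hk : k ≤ 3) (hk' : k' ≤ 3)
    (h : 2 ≤ spiderDist i i' k k') : ¬R (x i k) (x i' k') := fun hr => by
  have := (hx i i' k k' hk hk' (by omega)).2.1 hr
  omega

lemma congr {R' : ι → ι → Prop} (hx : IsSpider R x) (h : ∀ a b, a ≠ b → (R a b ↔ R' a b)) :
    IsSpider R' x := fun i i' k k' hk hk' hd => by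
  obtain ⟨hne, hiff⟩ := hx i i' k k' hk hk' hd
  exact ⟨hne, (h _ _ hne).symm.trans hiff⟩

variable {ℓ s e : ι → ℤ}

lemma leg_of_right (hse : ∀ v, s v ≤ e v) (hx : IsSpider (IntervalAdj ℓ s e) x) (i : Fin 3)
    (hi : e (x 0 0) < s (x i 1) ∧ ℓ (x i 1) < ℓ (x 0 0)) :
    e (x i 2) < s (x i 1) ∧ ℓ (x i 1) < ℓ (x i 2) ∧ e (x i 2) < s (x i 3) ∧
      ℓ (x i 3) < ℓ (x i 2) := by
  have h12 := hx.rel (i := i) (i' := i) (k := 1) (k' := 2) (by norm_num) (by norm_num)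
    (by simp [spiderDist])
  have h23 := hx.rel (i := i) (i' := i) (k := 2) (k' := 3) (by norm_num) (by norm_num)
    (by simp [spiderDist])
  have h02 := hx.not_rel (i := 0) (i' := i) (k := 0) (k' := 2) (by norm_num) (by norm_num)
    (by simp [spiderDist])
  have h13 := hx.not_rel (i := i) (i' := i) (k := 1) (k' := 3) (by norm_num) (by norm_num)
    (by simp [spiderDist])
  have := hse (x i 1); have := hse (x i 2); have := hse (x i 3)
  unfold IntervalAdj at h12 h23 h02 h13
  omega

lemma false_of_middle (hse : ∀ v, s v ≤ e v) (hx : IsSpider (IntervalAdj ℓ s e) x)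
    (hright : ∀ i, e (x 0 0) < s (x i 1) ∧ ℓ (x i 1) < ℓ (x 0 0)) {i j k : Fin 3}
    (hij : i ≠ j) (hjk : j ≠ k) (hin : e (x i 2) < s (x j 1)) (hout : e (x j 2) < s (x k 1)) :
    False := by
  have hi := hx.leg_of_right hse i (hright i)
  have hj := hx.leg_of_right hse j (hright j)
  have hk := hright k
  have h21 := hx.not_rel (i := i) (i' := j) (k := 2) (k' := 1) (by norm_num) (by norm_num)
    (by simp [spiderDist, hij])
  have h12 := hx.not_rel (i := j) (i' := i) (k := 2) (k' := 1) (by norm_num) (by norm_num)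
    (by simp [spiderDist, hij.symm])
  have h12' := hx.not_rel (i := j) (i' := k) (k := 2) (k' := 1) (by norm_num) (by norm_num)
    (by simp [spiderDist, hjk])
  have h03 := hx.not_rel (i := 0) (i' := j) (k := 0) (k' := 3) (by norm_num) (by norm_num)
    (by simp [spiderDist])
  have := hse (x j 2)
  have := hright i
  unfold IntervalAdj at h21 h12 h12' h03
  -- `ℓ c ≤ ℓ (x j 3) < ℓ (x j 2) ≤ ℓ (x k 1) < ℓ c` for the centre `c = x 0 0`
  omega

lemma false_of_right (hse : ∀ v, s v ≤ e v) (hx : IsSpider (IntervalAdj ℓ s e) x)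
    (hright : ∀ i, e (x 0 0) < s (x i 1) ∧ ℓ (x i 1) < ℓ (x 0 0)) : False := by
  obtain ⟨i, j, k, hij, hjk, hin, hout⟩ :=
    Fin.exists_chain_of_total (fun i j => e (x i 2) < s (x j 1)) fun i j _ => by
      have := hx.leg_of_right hse i (hright i)
      have := hx.leg_of_right hse j (hright j)
      omega
  exact hx.false_of_middle hse hright hij hjk hin hout

theorem false_of_intervalAdj (hse : ∀ v, s v ≤ e v) (hx : IsSpider (IntervalAdj ℓ s e) x) :
    False := by
  have hc1 : ∀ i, IntervalAdj ℓ s e (x 0 0) (x i 1) := fun i =>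
    hx.rel (by norm_num) (by norm_num) (by simp [spiderDist])
  -- reversing both the positions and the labels preserves the model
  wlog h0 : e (x 0 0) < s (x 0 1) ∧ ℓ (x 0 1) < ℓ (x 0 0) generalizing ℓ s e
  · refine this (ℓ := -ℓ) (s := -e) (e := -s) (fun v => neg_le_neg (hse v))
      (by rwa [intervalAdj_neg]) (by rwa [intervalAdj_neg]) ?_
    have := hc1 0
    simp only [IntervalAdj, Pi.neg_apply] at this h0 ⊢
    omega
  refine hx.false_of_right hse fun i => ?_
  obtain rfl | hi := eq_or_ne i 0
  · exact h0
  have h11 := hx.not_rel (i := 0) (i' := i) (k := 1) (k' := 1) (by norm_num) (by norm_num)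
    (by simp [spiderDist, hi.symm])
  have hci := hc1 i
  have hc0 := hc1 0
  have := hse (x 0 0)
  unfold IntervalAdj at h11 hci hc0
  omega

end IsSpider

namespace SimpleGraph

variable {V : Type*} {G : SimpleGraph V} {u v w x y z : V}

lemma Walk.IsPath.ne_of_length_pos {p : G.Walk u v} (hp : p.IsPath) (h : 0 < p.length) :
    u ≠ v := by
  rintro rfl
  have := (Walk.isPath_iff_nil.1 hp).length_eq_zero
  omega

lemma Walk.IsPath.append_of_inter {p : G.Walk u v} {q : G.Walk v w} (hp : p.IsPath)
    (hq : q.IsPath) (h : ∀ x ∈ p.support, x ∈ q.support → x = v) : (p.append q).IsPath := by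
  have hq' := hq.support_nodup
  rw [← q.cons_tail_support, List.nodup_cons] at hq'
  rw [Walk.isPath_def, Walk.support_append, List.nodup_append]
  refine ⟨hp.support_nodup, hq'.2, fun x hx y hy hxy => ?_⟩
  subst hxy
  obtain rfl := h x hx (List.mem_of_mem_tail hy)
  exact hq'.1 hy

lemma Walk.IsPath.exists_isPath_getVert {p : G.Walk u v} (hp : p.IsPath) {i j : ℕ}
    (hij : i ≤ j) (hj : j ≤ p.length) :
    ∃ q : G.Walk (p.getVert i) (p.getVert j), q.IsPath ∧ q.length = j - i ∧
      q.support ⊆ p.support := by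
  have hend : (p.drop i).getVert (j - i) = p.getVert j := by
    rw [Walk.drop_getVert]; congr 1; omega
  refine ⟨((p.drop i).take (j - i)).copy rfl hend, by simpa using (hp.drop i).take (j - i),
    by simp; omega, fun x hx => ?_⟩
  obtain ⟨n, rfl, -⟩ := Walk.mem_support_iff_exists_getVert.1 (by simpa using hx)
  simp [Walk.getVert_mem_support]

lemma IsAcyclic.eq_of_isPath (hG : G.IsAcyclic) {p q : G.Walk u v} (hp : p.IsPath)
    (hq : q.IsPath) : p = q :=
  congrArg Subtype.val ((hG.subsingleton_path u v).elim ⟨p, hp⟩ ⟨q, hq⟩)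

lemma IsAcyclic.adj_iff_length_eq_one (hG : G.IsAcyclic) {p : G.Walk u v} (hp : p.IsPath) :
    G.Adj u v ↔ p.length = 1 :=
  ⟨fun h => by rw [hG.eq_of_isPath hp (Path.singleton h).2]; rfl, Walk.adj_of_length_eq_one⟩

lemma IsAcyclic.adj_getVert_iff (hG : G.IsAcyclic) {p : G.Walk u v} (hp : p.IsPath) {i j : ℕ}
    (hi : i ≤ p.length) (hj : j ≤ p.length) :
    G.Adj (p.getVert i) (p.getVert j) ↔ i + 1 = j ∨ j + 1 = i := by
  wlog hij : i ≤ j generalizing i j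
  · rw [G.adj_comm, or_comm]
    exact this hj hi (by omega)
  obtain ⟨q, hq, hlen, -⟩ := hp.exists_isPath_getVert hij hj
  rw [hG.adj_iff_length_eq_one hq, hlen]
  omega

lemma Walk.IsPath.exists_isPath_getVert_of_inter {a b : V} {A : G.Walk u a} {B : G.Walk u b}
    (hA : A.IsPath) (hB : B.IsPath) (hAB : ∀ z ∈ A.support, z ∈ B.support → z = u) {k k' : ℕ}
    (hk : k ≤ A.length) (hk' : k' ≤ B.length) :
    ∃ q : G.Walk (A.getVert k) (B.getVert k'), q.IsPath ∧ q.length = k + k' := by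
  refine ⟨(A.take k).reverse.append (B.take k'), ((hA.take k).reverse).append_of_inter
    (hB.take k') fun z hz hz' => hAB z ?_ ?_, by simp; omega⟩
  · rw [Walk.support_reverse, List.mem_reverse, Walk.support_take] at hz
    exact List.mem_of_mem_take hz
  · rw [Walk.support_take] at hz'
    exact List.mem_of_mem_take hz'

lemma IsAcyclic.isSpider_of_arms (hG : G.IsAcyclic) (arm : Fin 3 → Σ a, G.Walk u a)
    (hpath : ∀ i, (arm i).2.IsPath) (hlen : ∀ i, 3 ≤ (arm i).2.length)
    (hinter : ∀ i j, i ≠ j → ∀ z ∈ (arm i).2.support, z ∈ (arm j).2.support → z = u) :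
    IsSpider G.Adj fun i => (arm i).2.getVert := by
  intro i i' k k' hk hk' hpos
  suffices ∃ q : G.Walk ((arm i).2.getVert k) ((arm i').2.getVert k'), q.IsPath ∧
      q.length = spiderDist i i' k k' by
    obtain ⟨q, hq, hqlen⟩ := this
    exact ⟨hq.ne_of_length_pos (hqlen ▸ hpos), hqlen ▸ hG.adj_iff_length_eq_one hq⟩
  have := hlen i
  have := hlen i'
  by_cases hii : i = i'
  · subst hii
    rw [spiderDist, if_pos rfl]
    rcases le_total k k' with h | h
    · obtain ⟨q, hq, hqlen, -⟩ := (hpath i).exists_isPath_getVert h (by omega)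
      exact ⟨q, hq, by omega⟩
    · obtain ⟨q, hq, hqlen, -⟩ := (hpath i).exists_isPath_getVert h (by omega)
      exact ⟨q.reverse, hq.reverse, by simp; omega⟩
  · rw [spiderDist, if_neg hii]
    exact (hpath i).exists_isPath_getVert_of_inter (hpath i') (hinter i i' hii) (by omega)
      (by omega)

lemma exists_isPath_forall_length_le [Fintype V] [Nonempty V] (G : SimpleGraph V) :
    ∃ (a b : V) (p : G.Walk a b), p.IsPath ∧
      ∀ (a' b' : V) (q : G.Walk a' b'), q.IsPath → q.length ≤ p.length := by
  obtain ⟨v⟩ := ‹Nonempty V›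
  let S := {n | ∃ (a b : V) (p : G.Walk a b), p.IsPath ∧ p.length = n}
  have hS : BddAbove S := ⟨Fintype.card V, by rintro _ ⟨a, b, p, hp, rfl⟩; exact hp.length_lt.le⟩
  have hne : S.Nonempty := ⟨0, v, v, .nil, .nil, rfl⟩
  obtain ⟨a, b, p, hp, hlen⟩ := Nat.sSup_mem hne hS
  exact ⟨a, b, p, hp, fun a' b' q hq => hlen ▸ le_csSup hS ⟨a', b', q, hq, rfl⟩⟩

lemma IsAcyclic.mem_support_of_adj_of_adj_s18 (hG : G.IsAcyclic) (h₁ : G.Adj x z) (h₂ : G.Adj z y)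
    (hxy : x ≠ y) {q : G.Walk x y} (hq : q.IsPath) : z ∈ q.support := by
  have hpath : (Walk.cons h₁ (Walk.cons h₂ Walk.nil)).IsPath := by
    simp [h₁.ne, h₂.ne, hxy]
  simp [← hG.eq_of_isPath hpath hq]

lemma IsAcyclic.support_eq_of_adj (hG : G.IsAcyclic) (h : G.Adj x y) {q : G.Walk x y}
    (hq : q.IsPath) : q.support = [x, y] := by
  simp [← hG.eq_of_isPath (Path.singleton h).2 hq]

lemma Walk.IsPath.exists_isPath_of_mem_support {a b : V} {p : G.Walk a b} (hp : p.IsPath)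
    (hu : u ∈ p.support) (hv : v ∈ p.support) :
    ∃ q : G.Walk u v, q.IsPath ∧ q.support ⊆ p.support := by
  obtain ⟨i, rfl, hi⟩ := Walk.mem_support_iff_exists_getVert.1 hu
  obtain ⟨j, rfl, hj⟩ := Walk.mem_support_iff_exists_getVert.1 hv
  rcases le_total i j with h | h
  · obtain ⟨q, hq, -, hsub⟩ := hp.exists_isPath_getVert h hj
    exact ⟨q, hq, hsub⟩
  · obtain ⟨q, hq, -, hsub⟩ := hp.exists_isPath_getVert h hi
    exact ⟨q.reverse, hq.reverse, by simpa using hsub⟩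

lemma Connected.exists_nearest_isPath {a b : V} (hG : G.Connected) (p : G.Walk a b) (v : V) :
    ∃ u ∈ p.support, (∀ u' ∈ p.support, G.dist u v ≤ G.dist u' v) ∧
      ∃ W : G.Walk u v, W.IsPath ∧ W.length = G.dist u v ∧
        ∀ z ∈ p.support, z ∈ W.support → z = u := by
  classical
  obtain ⟨u, hu, hmin⟩ := p.support.toFinset.exists_min_image (G.dist · v) ⟨a, by simp⟩
  rw [List.mem_toFinset] at hu
  obtain ⟨W, hW, hWlen⟩ := hG.exists_path_of_dist u v
  refine ⟨u, hu, fun u' hu' => hmin u' (List.mem_toFinset.2 hu'), W, hW, hWlen,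
    fun z hzp hzW => ?_⟩
  by_contra hzu
  have := W.length_dropUntil_lt_length hzW hzu
  have := dist_le (W.dropUntil z hzW)
  have := hmin z (List.mem_toFinset.2 hzp)
  omega

lemma IsTree.exists_isSpider [Fintype V] (hT : G.IsTree)
    (h : ¬∃ (a b : V) (p : G.Walk a b), p.IsPath ∧ ∀ v, ∃ u ∈ p.support, G.dist u v ≤ 2) :
    ∃ x : Fin 3 → ℕ → V, IsSpider G.Adj x := by
  classical
  have := hT.connected.nonempty
  obtain ⟨a, b, p, hp, hmax⟩ := G.exists_isPath_forall_length_le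
  push Not at h
  obtain ⟨v, hv⟩ := h a b p hp
  obtain ⟨u, hu, -, W, hW, hWlen, hWp⟩ := hT.connected.exists_nearest_isPath p v
  set p₁ := p.takeUntil u hu
  set p₂ := p.dropUntil u hu
  have hsplit : (p₁.append p₂).IsPath := by rw [p.take_spec hu]; exact hp
  have hlen : p₁.length + p₂.length = p.length := by
    rw [← Walk.length_append, p.take_spec hu]
  have h₁₂ : ∀ z ∈ p₁.support, z ∈ p₂.support → z = u := fun z h₁ h₂ => by
    by_contra hzu
    exact hsplit.ne_of_mem_support_of_append hzu h₁ h₂ rfl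
  have h₁W : ∀ z ∈ p₁.support, z ∈ W.support → z = u := fun z h₁ =>
    hWp z (p.support_takeUntil_subset_support hu h₁)
  have h₂W : ∀ z ∈ p₂.support, z ∈ W.support → z = u := fun z h₂ =>
    hWp z (p.support_dropUntil_subset_support hu h₂)
  have hp₁ : p₁.IsPath := hp.takeUntil hu
  have hp₂ : p₂.IsPath := hp.dropUntil hu
  have hW3 : 3 ≤ W.length := hWlen ▸ hv u hu
  -- by maximality of `p`, both halves are at least as long as `W`
  have hW₁ := hmax _ _ _ (hW.reverse.append_of_inter hp₂ fun z hz => by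
    rw [Walk.support_reverse, List.mem_reverse] at hz
    exact fun hz₂ => h₂W z hz₂ hz)
  have hW₂ := hmax _ _ _ (hp₁.append_of_inter hW h₁W)
  simp only [Walk.length_append, Walk.length_reverse] at hW₁ hW₂
  refine ⟨_, hT.isAcyclic.isSpider_of_arms ![⟨a, p₁.reverse⟩, ⟨b, p₂⟩, ⟨v, W⟩]
    (fun i => by fin_cases i <;> simp [hp₁.reverse, hp₂, hW])
    (fun i => by fin_cases i <;> simp <;> omega) fun i j hij z hi hj => ?_⟩
  fin_cases i <;> fin_cases j <;> simp at hij hi hj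
  · exact h₁₂ z hi hj
  · exact h₁W z hi hj
  · exact h₁₂ z hj hi
  · exact h₂W z hi hj
  · exact h₁W z hj hi
  · exact h₂W z hj hi

end SimpleGraph

theorem IsSpider.not_rep12L {α : Type*} [Fintype α] {G : SimpleGraph α}
    {x : Fin 3 → ℕ → α} (hx : IsSpider G.Adj x) (ℓ : α → ℕ) (w : List ℕ) : ¬Rep12L G ℓ w := by
  intro h
  obtain ⟨s, e, hm⟩ := h.exists_isIntervalModel
  have hcast : IntervalAdj (fun v => (ℓ v : ℤ)) (fun v => (s v : ℤ)) (fun v => (e v : ℤ)) =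
      IntervalAdj ℓ s e := intervalAdj_congr (fun _ _ => Nat.cast_lt) (fun _ _ => Nat.cast_lt)
  refine IsSpider.false_of_intervalAdj (ℓ := fun v => (ℓ v : ℤ)) (s := fun v => (s v : ℤ))
    (e := fun v => (e v : ℤ)) (fun v => by exact_mod_cast hm.le v) (hx.congr fun a b hab => ?_)
  rw [hcast, hm.adj_iff hab]

def pos4 (a b c d : ℕ) : ℕ ×ₗ ℕ ×ₗ ℕ ×ₗ ℕ := toLex (a, toLex (b, toLex (c, d)))

lemma pos4_lt_pos4 {a b c d a' b' c' d' : ℕ} :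
    pos4 a b c d < pos4 a' b' c' d' ↔
      a < a' ∨ a = a' ∧ (b < b' ∨ b = b' ∧ (c < c' ∨ c = c' ∧ d < d')) := by
  simp [pos4, Prod.Lex.toLex_lt_toLex]

lemma pos4_inj {a b c d a' b' c' d' : ℕ} :
    pos4 a b c d = pos4 a' b' c' d' ↔ a = a' ∧ b = b' ∧ c = c' ∧ d = d' := by
  simp [pos4]

inductive DCVertex
  | spine (n : ℕ)
  | child (n j : ℕ)
  | grandchild (n j t : ℕ)

namespace DCVertex

def Link : DCVertex → DCVertex → Prop
  | spine n, spine m => m = n + 1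
  | spine n, child m _ => m = n
  | child n j, grandchild m k _ => m = n ∧ k = j
  | _, _ => False

def Bounded (N : ℕ) : DCVertex → Prop
  | spine _ => True
  | child _ j => j < N
  | grandchild _ j t => j < N ∧ t < N

/-! Consecutive spine vertices alternate between a high and a low label, the one with the higher
label lying to the left. The children of a spine vertex are pairwise nested intervals next to it,
and the interval of a grandchild ends just before that of its parent (even spine index) or starts
just after it (odd spine index), with a label just above, respectively just below, the parent's.
The bound `N` on the indices of children and grandchildren is used to reverse their order. -/

def startPos (N : ℕ) : DCVertex → ℕ ×ₗ ℕ ×ₗ ℕ ×ₗ ℕ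
  | spine n => if n % 2 = 0 then pos4 n 0 0 0 else pos4 (n + 2) 0 0 0
  | child n j => if n % 2 = 0 then pos4 (n + 1) 2 (j + 1) 0 else pos4 n 1 (j + 1) 0
  | grandchild n j t => if n % 2 = 0 then pos4 n 0 (j + 1) (t + 1) else pos4 n 3 (N - j) (t + 2)

def endPos (N : ℕ) : DCVertex → ℕ ×ₗ ℕ ×ₗ ℕ ×ₗ ℕ
  | spine n => if n % 2 = 0 then pos4 n 1 0 0 else pos4 (n + 2) 1 0 0
  | child n j => if n % 2 = 0 then pos4 (n + 1) 3 (N - j) 0 else pos4 n 3 (N - j) 1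
  | grandchild n j t =>
    if n % 2 = 0 then pos4 (n + 1) 2 j (t + 1) else pos4 (n + 2) 0 (j + 1) (t + 1)

def label (N : ℕ) : DCVertex → ℕ ×ₗ ℕ ×ₗ ℕ ×ₗ ℕ
  | spine n => if n % 2 = 0 then pos4 (n + 2) 0 0 0 else pos4 n 0 0 0
  | child n j => if n % 2 = 0 then pos4 n 1 (j + 1) 0 else pos4 (n + 1) 0 (N - j) (N + 1)
  | grandchild n j t =>
    if n % 2 = 0 then pos4 n 1 (j + 1) (t + 1) else pos4 (n + 1) 0 (N - j) (t + 1)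

end DCVertex

open DCVertex

/-- The infinite double caterpillar. -/
def dcGraph : SimpleGraph DCVertex := SimpleGraph.fromRel Link

lemma dcGraph_adj_iff_intervalAdj {N : ℕ} {x y : DCVertex} (hx : x.Bounded N) (hy : y.Bounded N)
    (hxy : x ≠ y) : dcGraph.Adj x y ↔ IntervalAdj (label N) (startPos N) (endPos N) x y := by
  cases x <;> cases y <;>
    simp only [Bounded, ne_eq, reduceCtorEq, not_false_eq_true, spine.injEq, child.injEq,
      grandchild.injEq] at hx hy hxy <;>
    simp only [dcGraph, fromRel_adj, Link, IntervalAdj, startPos, endPos, label, ne_eq,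
      reduceCtorEq, spine.injEq, child.injEq, grandchild.injEq, hxy, not_false_eq_true,
      true_and] <;>
    split_ifs <;> norm_num [pos4_lt_pos4] <;> omega

lemma DCVertex.startPos_lt_endPos (N : ℕ) (x : DCVertex) : x.startPos N < x.endPos N := by
  cases x <;> simp only [startPos, endPos] <;> split_ifs <;> norm_num [pos4_lt_pos4]

lemma DCVertex.label_injOn {N : ℕ} {x y : DCVertex} (hx : x.Bounded N) (hy : y.Bounded N)
    (h : x.label N = y.label N) : x = y := by
  cases x <;> cases y <;> simp only [Bounded, label] at hx hy h <;> split_ifs at h <;>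
    simp only [pos4_inj] at h <;>
    simp only [spine.injEq, child.injEq, grandchild.injEq, reduceCtorEq] <;> omega

namespace SimpleGraph.Walk

variable {V : Type*} {G : SimpleGraph V} {a b u v : V}

variable (p : G.Walk a b)

def IsChild (v : V) : Prop := v ∉ p.support ∧ ∃ u ∈ p.support, G.Adj u v

def IsGrandchild (v : V) : Prop := v ∉ p.support ∧ ¬p.IsChild v

lemma mem_support_or_isChild_or_isGrandchild (v : V) :
    v ∈ p.support ∨ p.IsChild v ∨ p.IsGrandchild v := by
  by_cases h₁ : v ∈ p.support
  · exact .inl h₁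
  · by_cases h₂ : p.IsChild v
    exacts [.inr (.inl h₂), .inr (.inr ⟨h₁, h₂⟩)]

open Classical in
noncomputable def spineNbr (c : V) : V := if h : ∃ u ∈ p.support, G.Adj u c then h.choose else c

open Classical in
noncomputable def childNbr (g : V) : V := if h : ∃ m, p.IsChild m ∧ G.Adj m g then h.choose else g

variable {p}

lemma IsChild.spineNbr_spec {c : V} (hc : p.IsChild c) :
    p.spineNbr c ∈ p.support ∧ G.Adj (p.spineNbr c) c := by
  rw [spineNbr, dif_pos hc.2]
  exact hc.2.choose_spec

lemma IsPath.adj_iff_idxOf [DecidableEq V] (hG : G.IsAcyclic) (hp : p.IsPath) (hu : u ∈ p.support)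
    (hv : v ∈ p.support) :
    G.Adj u v ↔ p.support.idxOf u + 1 = p.support.idxOf v ∨
      p.support.idxOf v + 1 = p.support.idxOf u := by
  have hget : ∀ {w}, w ∈ p.support →
      p.getVert (p.support.idxOf w) = w ∧ p.support.idxOf w ≤ p.length := fun hw => by
    have hlt := List.idxOf_lt_length_iff.2 hw
    rw [length_support] at hlt
    exact ⟨by rw [getVert_eq_support_getElem _ (by omega), List.getElem_idxOf], by omega⟩
  obtain ⟨hu₁, hu₂⟩ := hget hu
  obtain ⟨hv₁, hv₂⟩ := hget hv
  conv_lhs => rw [← hu₁, ← hv₁]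
  exact hG.adj_getVert_iff hp hu₂ hv₂

lemma IsPath.eq_spineNbr (hG : G.IsAcyclic) (hp : p.IsPath) {c : V} (hc : p.IsChild c)
    (hu : u ∈ p.support) (hadj : G.Adj u c) : u = p.spineNbr c := by
  obtain ⟨hσ, hσc⟩ := hc.spineNbr_spec
  by_contra hne
  obtain ⟨q, hq, hsub⟩ := hp.exists_isPath_of_mem_support hu hσ
  exact hc.1 (hsub (hG.mem_support_of_adj_of_adj_s18 hadj hσc.symm hne hq))

lemma IsPath.exists_isPath_of_isChild (hp : p.IsPath) {c c' : V} (hc : p.IsChild c)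
    (hc' : p.IsChild c') (hne : c ≠ c') :
    ∃ q : G.Walk c c', q.IsPath ∧ p.spineNbr c ∈ q.support ∧
      ∀ z ∈ q.support, z ∈ p.support ∨ z = c ∨ z = c' := by
  obtain ⟨hσ, hσc⟩ := hc.spineNbr_spec
  obtain ⟨hσ', hσc'⟩ := hc'.spineNbr_spec
  obtain ⟨q, hq, hsub⟩ := hp.exists_isPath_of_mem_support hσ hσ'
  have hqc' : (q.concat hσc').IsPath := hq.concat (fun h => hc'.1 (hsub h)) hσc'
  refine ⟨Walk.cons hσc.symm (q.concat hσc'), ?_, by simp, fun z hz => ?_⟩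
  · refine hqc'.cons fun h => ?_
    rw [support_concat, List.mem_append, List.mem_singleton] at h
    exact h.elim (fun h => hc.1 (hsub h)) hne
  · simp only [support_cons, support_concat, List.mem_cons, List.mem_append] at hz
    rcases hz with rfl | h | rfl | h
    · exact .inr (.inl rfl)
    · exact .inl (hsub h)
    · exact .inr (.inr rfl)
    · exact absurd h List.not_mem_nil

lemma IsPath.not_adj_of_isChild (hG : G.IsAcyclic) (hp : p.IsPath) {c c' : V}
    (hc : p.IsChild c) (hc' : p.IsChild c') : ¬G.Adj c c' := fun hadj => by
  obtain ⟨q, hq, hσ, -⟩ := hp.exists_isPath_of_isChild hc hc' hadj.ne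
  rw [hG.support_eq_of_adj hadj hq] at hσ
  have := hc.spineNbr_spec.1
  simp only [List.mem_cons, List.not_mem_nil, or_false] at hσ
  rcases hσ with h | h <;> rw [h] at this
  exacts [hc.1 this, hc'.1 this]

lemma IsGrandchild.childNbr_spec (hG : G.Connected)
    (hcov : ∀ v, ∃ u ∈ p.support, G.dist u v ≤ 2) {g : V} (hg : p.IsGrandchild g) :
    p.IsChild (p.childNbr g) ∧ G.Adj (p.childNbr g) g := by
  have h : ∃ m, p.IsChild m ∧ G.Adj m g := by
    obtain ⟨u, hu, hdist⟩ := hcov g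
    obtain ⟨W, -, hW⟩ := hG.exists_path_of_dist u g
    rcases W with _ | ⟨h₁, _ | ⟨h₂, _ | ⟨h₃, W⟩⟩⟩
    · exact absurd hu hg.1
    · exact absurd ⟨hg.1, u, hu, h₁⟩ hg.2
    · exact ⟨_, ⟨fun hm => hg.2 ⟨hg.1, _, hm, h₂⟩, u, hu, h₁⟩, h₂⟩
    · simp at hW
      omega
  rw [childNbr, dif_pos h]
  exact h.choose_spec

lemma IsPath.eq_childNbr (hT : G.IsTree) (hp : p.IsPath)
    (hcov : ∀ v, ∃ u ∈ p.support, G.dist u v ≤ 2) {g m : V} (hg : p.IsGrandchild g)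
    (hm : p.IsChild m) (hadj : G.Adj m g) : m = p.childNbr g := by
  obtain ⟨hπ, hπg⟩ := hg.childNbr_spec hT.connected hcov
  by_contra hne
  obtain ⟨q, hq, -, hsub⟩ := hp.exists_isPath_of_isChild hm hπ hne
  rcases hsub g (hT.isAcyclic.mem_support_of_adj_of_adj_s18 hadj hπg.symm hne hq) with h | h | h
  exacts [hg.1 h, hg.2 (h ▸ hm), hπg.ne' h]

lemma IsPath.not_adj_of_isGrandchild (hT : G.IsTree) (hp : p.IsPath)
    (hcov : ∀ v, ∃ u ∈ p.support, G.dist u v ≤ 2) {g g' : V} (hg : p.IsGrandchild g)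
    (hg' : p.IsGrandchild g') : ¬G.Adj g g' := fun hadj => by
  obtain ⟨hm, hmg⟩ := hg.childNbr_spec hT.connected hcov
  obtain ⟨hm', hmg'⟩ := hg'.childNbr_spec hT.connected hcov
  have : ∃ q : G.Walk g g', q.IsPath ∧ p.childNbr g ∈ q.support := by
    by_cases hmm : p.childNbr g = p.childNbr g'
    · refine ⟨Walk.cons hmg.symm (Walk.cons (hmm ▸ hmg') Walk.nil), ?_, by simp⟩
      have hmg'' : p.childNbr g ≠ g' := hmm ▸ hmg'.ne
      simp [hadj.ne, hmg'', hmg.ne']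
    · obtain ⟨q, hq, -, hsub⟩ := hp.exists_isPath_of_isChild hm hm' hmm
      have hg'q : g' ∉ q.support := fun h => by
        rcases hsub g' h with h | h | h
        exacts [hg'.1 h, hg'.2 (h ▸ hm), hg'.2 (h ▸ hm')]
      refine ⟨Walk.cons hmg.symm (q.concat hmg'), (hq.concat hg'q hmg').cons fun h => ?_, by simp⟩
      rw [support_concat, List.mem_append, List.mem_singleton] at h
      rcases h with h | h
      · rcases hsub g h with h | h | h
        exacts [hg.1 h, hg.2 (h ▸ hm), hg.2 (h ▸ hm')]
      · exact hadj.ne h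
  obtain ⟨q, hq, hmq⟩ := this
  rw [hT.isAcyclic.support_eq_of_adj hadj hq, List.mem_pair] at hmq
  rcases hmq with h | h
  exacts [hg.2 (h ▸ hm), hg'.2 (h ▸ hm)]

variable [DecidableEq V] [Fintype V]

variable (p) in
open Classical in
noncomputable def toDCVertex (v : V) : DCVertex :=
  if v ∈ p.support then .spine (p.support.idxOf v)
  else if p.IsChild v then .child (p.support.idxOf (p.spineNbr v)) (Fintype.equivFin V v)
  else .grandchild (p.support.idxOf (p.spineNbr (p.childNbr v))) (Fintype.equivFin V (p.childNbr v))
    (Fintype.equivFin V v)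

lemma toDCVertex_of_mem (hv : v ∈ p.support) : p.toDCVertex v = .spine (p.support.idxOf v) := by
  rw [toDCVertex, if_pos hv]

lemma IsChild.toDCVertex_eq {c : V} (hc : p.IsChild c) :
    p.toDCVertex c = .child (p.support.idxOf (p.spineNbr c)) (Fintype.equivFin V c) := by
  rw [toDCVertex, if_neg hc.1, if_pos hc]

lemma IsGrandchild.toDCVertex_eq {g : V} (hg : p.IsGrandchild g) :
    p.toDCVertex g = .grandchild (p.support.idxOf (p.spineNbr (p.childNbr g)))
      (Fintype.equivFin V (p.childNbr g)) (Fintype.equivFin V g) := by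
  rw [toDCVertex, if_neg hg.1, if_neg hg.2]

lemma IsPath.toDCVertex_adj_iff_of_mem_of_isChild (hG : G.IsAcyclic) (hp : p.IsPath) {c : V}
    (hu : u ∈ p.support) (hc : p.IsChild c) :
    dcGraph.Adj (p.toDCVertex u) (p.toDCVertex c) ↔ G.Adj u c := by
  rw [toDCVertex_of_mem hu, hc.toDCVertex_eq]
  simp only [dcGraph, fromRel_adj, Link, ne_eq, reduceCtorEq, not_false_eq_true, true_and,
    or_false, List.idxOf_inj hc.spineNbr_spec.1]
  exact ⟨fun h => h ▸ hc.spineNbr_spec.2, fun h => (hp.eq_spineNbr hG hc hu h).symm⟩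

lemma IsPath.toDCVertex_adj_iff_of_isChild_of_isGrandchild (hT : G.IsTree) (hp : p.IsPath)
    (hcov : ∀ v, ∃ u ∈ p.support, G.dist u v ≤ 2) {c g : V} (hc : p.IsChild c)
    (hg : p.IsGrandchild g) : dcGraph.Adj (p.toDCVertex c) (p.toDCVertex g) ↔ G.Adj c g := by
  rw [hc.toDCVertex_eq, hg.toDCVertex_eq]
  simp only [dcGraph, fromRel_adj, Link, ne_eq, reduceCtorEq, not_false_eq_true, true_and,
    or_false, Fin.val_inj, (Fintype.equivFin V).apply_eq_iff_eq]
  constructor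
  · rintro ⟨-, rfl⟩
    exact (hg.childNbr_spec hT.connected hcov).2
  · intro h
    obtain rfl := hp.eq_childNbr hT hcov hg hc h
    exact ⟨rfl, rfl⟩

lemma IsGrandchild.toDCVertex_adj_iff_of_mem {g : V} (hu : u ∈ p.support)
    (hg : p.IsGrandchild g) : dcGraph.Adj (p.toDCVertex u) (p.toDCVertex g) ↔ G.Adj u g := by
  rw [toDCVertex_of_mem hu, hg.toDCVertex_eq]
  simp only [dcGraph, fromRel_adj, Link, or_self, and_false, false_iff]
  exact fun h => hg.2 ⟨hg.1, u, hu, h⟩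

lemma IsPath.toDCVertex_adj_iff (hT : G.IsTree) (hp : p.IsPath)
    (hcov : ∀ v, ∃ u ∈ p.support, G.dist u v ≤ 2) (x y : V) :
    dcGraph.Adj (p.toDCVertex x) (p.toDCVertex y) ↔ G.Adj x y := by
  rcases p.mem_support_or_isChild_or_isGrandchild x with hx | hx | hx <;>
    rcases p.mem_support_or_isChild_or_isGrandchild y with hy | hy | hy
  · rw [toDCVertex_of_mem hx, toDCVertex_of_mem hy, hp.adj_iff_idxOf hT.isAcyclic hx hy]
    simp only [dcGraph, fromRel_adj, Link, ne_eq, spine.injEq]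
    omega
  · exact hp.toDCVertex_adj_iff_of_mem_of_isChild hT.isAcyclic hx hy
  · exact hy.toDCVertex_adj_iff_of_mem hx
  · rw [dcGraph.adj_comm, G.adj_comm]
    exact hp.toDCVertex_adj_iff_of_mem_of_isChild hT.isAcyclic hy hx
  · rw [hx.toDCVertex_eq, hy.toDCVertex_eq]
    simp only [dcGraph, fromRel_adj, Link, or_self, and_false, false_iff]
    exact hp.not_adj_of_isChild hT.isAcyclic hx hy
  · exact hp.toDCVertex_adj_iff_of_isChild_of_isGrandchild hT hcov hx hy
  · rw [dcGraph.adj_comm, G.adj_comm]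
    exact hx.toDCVertex_adj_iff_of_mem hy
  · rw [dcGraph.adj_comm, G.adj_comm]
    exact hp.toDCVertex_adj_iff_of_isChild_of_isGrandchild hT hcov hy hx
  · rw [hx.toDCVertex_eq, hy.toDCVertex_eq]
    simp only [dcGraph, fromRel_adj, Link, or_self, and_false, false_iff]
    exact hp.not_adj_of_isGrandchild hT hcov hx hy

lemma toDCVertex_injective : Function.Injective p.toDCVertex := by
  intro x y h
  by_cases hx : x ∈ p.support <;> by_cases hy : y ∈ p.support <;>
    simp only [toDCVertex, hx, hy, if_true, if_false] at h <;> (try split_ifs at h) <;>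
    simp only [spine.injEq, child.injEq, grandchild.injEq, Fin.val_inj,
      (Fintype.equivFin V).apply_eq_iff_eq] at h
  · exact (List.idxOf_inj hx).1 h
  · exact h.2
  · exact h.2.2

lemma toDCVertex_bounded (v : V) : (p.toDCVertex v).Bounded (Fintype.card V) := by
  unfold toDCVertex
  split_ifs <;> simp [Bounded]

end SimpleGraph.Walk

theorem rep12L_of_dominating_path {α : Type*} [Fintype α] {T : SimpleGraph α} (hT : T.IsTree)
    {a b : α} {p : T.Walk a b} (hp : p.IsPath) (hcov : ∀ v, ∃ u ∈ p.support, T.dist u v ≤ 2) :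
    ∃ (ℓ : α → ℕ) (w : List ℕ), (∀ v, 0 < ℓ v) ∧ Rep12L T ℓ w := by
  classical
  let N := Fintype.card α
  let f := p.toDCVertex
  have hf : ∀ v, (f v).Bounded N := fun v => Walk.toDCVertex_bounded v
  obtain ⟨ℓ, hpos, hℓ⟩ := exists_pos_nat_lt_iff fun v => (f v).label N
  have hmodel : IsIntervalModel T ℓ (fun v => (f v).startPos N) (fun v => (f v).endPos N) := by
    refine ⟨fun v => (startPos_lt_endPos N (f v)).le, fun x y hxy => ?_⟩
    rw [← hp.toDCVertex_adj_iff hT hcov, dcGraph_adj_iff_intervalAdj (hf x) (hf y)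
      (Walk.toDCVertex_injective.ne hxy)]
    simp only [IntervalAdj, hℓ]
  have hinj : Function.Injective ℓ := fun x y h => Walk.toDCVertex_injective <|
    label_injOn (hf x) (hf y) <| le_antisymm (not_lt.1 fun h' => ((hℓ y x).2 h').ne' h)
      (not_lt.1 fun h' => ((hℓ x y).2 h').ne h)
  obtain ⟨w, hw⟩ := hmodel.exists_rep12L hinj
  exact ⟨ℓ, w, hpos, hw⟩

theorem stmt_18_general {α : Type*} [Fintype α]
    (T : SimpleGraph α) (hT : T.IsTree) :
    (∃ (ℓ : α → ℕ) (w : List ℕ), (∀ v, 0 < ℓ v) ∧ Rep12L T ℓ w) ↔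
      (∃ (a b : α) (p : T.Walk a b), p.IsPath ∧
        ∀ v : α, ∃ u ∈ p.support, T.dist u v ≤ 2) := by
  constructor
  · rintro ⟨ℓ, w, -, hw⟩
    by_contra h
    obtain ⟨x, hx⟩ := hT.exists_isSpider h
    exact hx.not_rep12L ℓ w hw
  · rintro ⟨a, b, p, hp, hcov⟩
    exact rep12L_of_dominating_path hT hp hcov

/-- a tree is 12-representable (some injective labeling of its
vertices by positive integers admits a 12-representing word) iff it is a double
caterpillar: there is a path such that every vertex is within distance 2 of it. -/
theorem stmt_18 {α : Type*} [Fintype α] [DecidableEq α]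
    (T : SimpleGraph α) (hT : T.IsTree) :
    (∃ (ℓ : α → ℕ) (w : List ℕ), (∀ v, 0 < ℓ v) ∧ Rep12L T ℓ w) ↔
      (∃ (a b : α) (p : T.Walk a b), p.IsPath ∧
        ∀ v : α, ∃ u ∈ p.support, T.dist u v ≤ 2) :=
  stmt_18_general T hT
end
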